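/- Let n ≥ 1 be an integer, 0 < R₂ < R₁, p > 2 a real number, and let f⁺ : [R₂,R₁] → ℝ be continuous with f⁺(r) > 0 for all r ∈ [R₂,R₁]. For t ∈ ℝ and ρ ∈ [R₂,R₁] define F(ρ,t) := (t·R₂ⁿ − ∫_{R₂}^ρ f⁺(r)r^{n−1} dr)/ρⁿ, and define M_p(t) := ∫_{R₂}^{R₁} sgn(F(ρ,t))·|F(ρ,t)·ρ|^{1/(p−1)} dρ. Then M_p : ℝ → ℝ is continuous and strictly increasing. -/

import Mathlib

/-!
For `ρ > 0` the integrand of `M_p(t)` is `φ(F(ρ,t)ρ)` with `φ(s) = sgn(s)|s|^{1/(p-1)}`, the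
odd extension of `s ↦ s^{1/(p-1)}`, which is continuous and strictly increasing. Since
`F(ρ,t)ρ` is affine in `t` with positive slope `R₂ⁿρ^{1-n}` and jointly continuous on
`ℝ × [R₂, R₁]`, the integrand is jointly continuous and strictly increasing in `t`, and so is
its integral.
-/

open Set Function MeasureTheory

namespace Real

noncomputable def signedRpow (a s : ℝ) : ℝ := sign s * |s| ^ a

theorem sign_mul_of_pos {x ρ : ℝ} (hρ : 0 < ρ) : sign (x * ρ) = sign x := by
  rcases lt_trichotomy x 0 with hx | rfl | hx
  · rw [sign_of_neg hx, sign_of_neg (mul_neg_of_neg_of_pos hx hρ)]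
  · simp
  · rw [sign_of_pos hx, sign_of_pos (mul_pos hx hρ)]

theorem signedRpow_neg (a s : ℝ) : signedRpow a (-s) = -signedRpow a s := by
  simp only [signedRpow, sign_neg, abs_neg, neg_mul]

theorem signedRpow_of_nonneg {a s : ℝ} (ha : 0 < a) (hs : 0 ≤ s) : signedRpow a s = s ^ a := by
  rcases hs.lt_or_eq with hs | rfl
  · rw [signedRpow, sign_of_pos hs, abs_of_pos hs, one_mul]
  · simp [signedRpow, zero_rpow ha.ne']

theorem signedRpow_eq_max_rpow_sub {a : ℝ} (ha : 0 < a) (s : ℝ) :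
    signedRpow a s = max s 0 ^ a - max (-s) 0 ^ a := by
  rcases le_total 0 s with hs | hs
  · rw [signedRpow_of_nonneg ha hs, max_eq_left hs, max_eq_right (neg_nonpos.2 hs),
      zero_rpow ha.ne', sub_zero]
  · rw [← neg_neg s, signedRpow_neg, signedRpow_of_nonneg ha (neg_nonneg.2 hs), neg_neg,
      max_eq_right hs, max_eq_left (neg_nonneg.2 hs), zero_rpow ha.ne', zero_sub]

theorem continuous_signedRpow {a : ℝ} (ha : 0 < a) : Continuous (signedRpow a) := by
  simp only [funext (signedRpow_eq_max_rpow_sub ha)]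
  exact ((continuous_id.max continuous_const).rpow_const fun _ => Or.inr ha.le).sub
    ((continuous_neg.max continuous_const).rpow_const fun _ => Or.inr ha.le)

theorem strictMono_signedRpow {a : ℝ} (ha : 0 < a) : StrictMono (signedRpow a) :=
  strictMono_of_odd_strictMonoOn_nonneg (signedRpow_neg a) <|
    (strictMonoOn_rpow_Ici_of_exponent_pos ha).congr fun _ hs =>
      (signedRpow_of_nonneg ha hs).symm

end Real

namespace intervalIntegral

variable {X E : Type*} [TopologicalSpace X] [NormedAddCommGroup E] [NormedSpace ℝ E]

theorem continuous_of_continuousOn_uncurry {K : X → ℝ → E} {a b : ℝ} (hab : a ≤ b)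
    (hK : ContinuousOn (uncurry K) (univ ×ˢ Icc a b)) :
    Continuous fun t => ∫ x in a..b, K t x := by
  -- clamping `x` into `[a, b]` changes no integral but makes the integrand continuous
  have hproj : Continuous fun x => (projIcc a b hab x : ℝ) :=
    continuous_subtype_val.comp continuous_projIcc
  have hclamp : Continuous (uncurry fun t x => K t (projIcc a b hab x)) :=
    hK.comp_continuous (continuous_fst.prodMk (hproj.comp continuous_snd))
      fun q => ⟨mem_univ _, (projIcc a b hab q.2).2⟩
  refine (continuous_parametric_intervalIntegral_of_continuous' (μ := volume) hclamp a b).congr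
    fun t => ?_
  refine integral_congr fun x hx => ?_
  rw [uIcc_of_le hab] at hx
  simp only [projIcc_of_mem hab hx]

theorem strictMono_of_strictMono_integrand {α : Type*} [Preorder α] {K : α → ℝ → ℝ}
    {a b : ℝ} (hab : a < b) (hK : ∀ t, IntervalIntegrable (K t) volume a b)
    (hmono : ∀ x ∈ Ioo a b, StrictMono fun t => K t x) :
    StrictMono fun t => ∫ x in a..b, K t x := by
  intro s t hst
  rw [← sub_pos, ← integral_sub (hK t) (hK s)]
  exact intervalIntegral_pos_of_pos_on ((hK t).sub (hK s))
    (fun x hx => sub_pos.2 (hmono x hx hst)) hab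

end intervalIntegral

open Real intervalIntegral in
theorem Mp_continuous_strictMono_general (n : ℕ) (R₂ R₁ : ℝ)
    (hR₂ : 0 < R₂) (hR : R₂ < R₁) (p : ℝ) (hp : 2 < p)
    (f : ℝ → ℝ) (hf : ContinuousOn f (Set.Icc R₂ R₁))
    (F : ℝ → ℝ → ℝ)
    (hF : ∀ ρ t, F ρ t = (t * R₂ ^ n - ∫ r in R₂..ρ, f r * r ^ (n - 1)) / ρ ^ n)
    (M : ℝ → ℝ)
    (hM : ∀ t, M t = ∫ ρ in R₂..R₁,
      Real.sign (F ρ t) * |F ρ t * ρ| ^ (1 / (p - 1))) :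
    Continuous M ∧ StrictMono M := by
  set G := fun ρ => ∫ r in R₂..ρ, f r * r ^ (n - 1)
  set K := fun t ρ => signedRpow (1 / (p - 1)) ((t * R₂ ^ n - G ρ) / ρ ^ n * ρ)
  have hq : 0 < 1 / (p - 1) := one_div_pos.2 (by linarith)
  have hG : ContinuousOn G (Icc R₂ R₁) := by
    rw [← uIcc_of_le hR.le]
    exact continuousOn_primitive_interval'
      ((hf.mul (continuous_pow _).continuousOn).intervalIntegrable_of_Icc hR.le) left_mem_uIcc
  have hK : ContinuousOn (uncurry K) (univ ×ˢ Icc R₂ R₁) :=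
    (continuous_signedRpow hq).comp_continuousOn <|
      (((continuousOn_fst.mul continuousOn_const).sub (hG.comp continuousOn_snd fun _ h => h.2)).div
        (continuousOn_snd.pow n) fun _ h => (pow_pos (hR₂.trans_le h.2.1) n).ne').mul
      continuousOn_snd
  have hMK : M = fun t => ∫ ρ in R₂..R₁, K t ρ := by
    funext t
    rw [hM]
    refine integral_congr fun ρ hρ => ?_
    have hρ : 0 < ρ := hR₂.trans_le (uIcc_of_le hR.le ▸ hρ).1
    simp only [hF, K, G, signedRpow, sign_mul_of_pos hρ]
  refine ⟨hMK ▸ continuous_of_continuousOn_uncurry hR.le hK,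
    hMK ▸ strictMono_of_strictMono_integrand hR (fun t => ?_) fun ρ hρ => ?_⟩
  · have hKt : ContinuousOn (fun ρ => uncurry K (t, ρ)) (Icc R₂ R₁) :=
      hK.comp (continuousOn_const.prodMk continuousOn_id) fun _ h => ⟨mem_univ _, h⟩
    exact hKt.intervalIntegrable_of_Icc hR.le
  · have hρ : 0 < ρ := hR₂.trans hρ.1
    refine (strictMono_signedRpow hq).comp fun t₁ t₂ ht => ?_
    gcongr

/-- The boundary-value map `M_p(t) = ∫_{R₂}^{R₁} sgn(F(ρ,t))|F(ρ,t)ρ|^{1/(p-1)} dρ`,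
where `F(ρ,t) = (tR₂ⁿ - ∫_{R₂}^ρ f⁺ r^{n-1} dr)/ρⁿ`, is continuous and strictly
increasing in `t` (Second Part of the proof of Lemma 2.7). -/
theorem Mp_continuous_strictMono (n : ℕ) (hn : 1 ≤ n) (R₂ R₁ : ℝ)
    (hR₂ : 0 < R₂) (hR : R₂ < R₁) (p : ℝ) (hp : 2 < p)
    (f : ℝ → ℝ) (hf : ContinuousOn f (Set.Icc R₂ R₁))
    (hfpos : ∀ r ∈ Set.Icc R₂ R₁, 0 < f r)
    (F : ℝ → ℝ → ℝ)
    (hF : ∀ ρ t, F ρ t = (t * R₂ ^ n - ∫ r in R₂..ρ, f r * r ^ (n - 1)) / ρ ^ n)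
    (M : ℝ → ℝ)
    (hM : ∀ t, M t = ∫ ρ in R₂..R₁,
      Real.sign (F ρ t) * |F ρ t * ρ| ^ (1 / (p - 1))) :
    Continuous M ∧ StrictMono M :=
  Mp_continuous_strictMono_general n R₂ R₁ hR₂ hR p hp f hf F hF M hM
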